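/- arXiv:math/0703298 — 2 statements merged into one kernel-verified Lean document; each statement's English description precedes it below -/
import Mathlib

section
/- If there exists an ℝ-linear map J : W → W with J∘J = −id_W which is orthogonal for the canonical pairing, i.e. ⟨Jx, Jy⟩ = ⟨x, y⟩ for all x, y ∈ W, then m = dim V is even. -/
/-! Let `G` be the Gram matrix of `⟨·,·⟩` and `J` the matrix of the complex structure.
Orthogonality and `J² = -1` make `G J` skew-symmetric. Neither `J` nor the nonsingular skew
matrix `G J` has a real eigenvalue, and a real matrix `M` without real eigenvalues has positive
determinant, since `det M` is the value at `0` of the characteristic polynomial of `-M`, a monic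
polynomial without real roots. Hence `det G = det (G J) / det J > 0`. But in a basis adapted to
`V ⊕ V*`, `G = ½ [[0, 1], [1, 0]]`, whose determinant has the sign of `(-1) ^ dim V`. -/

open Module

/-- The canonical symmetric bilinear form on `W = V ⊕ V*`:
`⟨X+ξ, Y+η⟩ = (1/2)(ξ(Y) + η(X))`. -/
noncomputable def pairB (V : Type*) [AddCommGroup V] [Module ℝ V] :
    LinearMap.BilinForm ℝ (V × Module.Dual ℝ V) :=
  LinearMap.mk₂ ℝ (fun x y => (1/2) * (x.2 y.1 + y.2 x.1))
    (fun x y z => by simp; ring)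
    (fun c x y => by simp; ring)
    (fun x y z => by simp; ring)
    (fun c x y => by simp; ring)

open Polynomial in
theorem Polynomial.Monic.eval_pos_of_forall_not_isRoot {p : ℝ[X]} (hp : p.Monic)
    (hroot : ∀ x, ¬ p.IsRoot x) (x : ℝ) : 0 < p.eval x := by
  by_cases h1 : p = 1
  · simp [h1]
  obtain ⟨y, hy⟩ := ((p.tendsto_atTop_of_leadingCoeff_nonneg (hp.degree_pos.mpr h1)
    (by rw [hp.leadingCoeff]; exact zero_le_one)).eventually_gt_atTop 0).exists
  by_contra! hx
  obtain ⟨z, -, hz⟩ := intermediate_value_uIcc p.continuous.continuousOn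
    (Set.mem_uIcc.mpr (Or.inl ⟨hx, hy.le⟩) : (0 : ℝ) ∈ Set.uIcc (p.eval x) (p.eval y))
  exact hroot z hz

theorem spectrum_eq_empty_of_mul_self_eq_neg_one {A : Type*} [Ring A] [Algebra ℝ A] {a : A}
    (ha : a * a = -1) : spectrum ℝ a = ∅ := by
  refine Set.eq_empty_of_forall_notMem fun r hr => spectrum.mem_iff.mp hr ?_
  have hcomm : Commute (algebraMap ℝ A r - a) (algebraMap ℝ A r + a) :=
    (Algebra.commute_algebraMap_right r _).add_right
      ((Algebra.commute_algebraMap_left r a).sub_left (Commute.refl a))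
  have hprod :
      (algebraMap ℝ A r - a) * (algebraMap ℝ A r + a) = algebraMap ℝ A (r ^ 2 + 1) := by
    rw [sub_mul, mul_add, mul_add, Algebra.commutes r a, ha, map_add, map_pow, map_one]
    noncomm_ring
  refine (hcomm.isUnit_mul_iff.mp ?_).1
  rw [hprod]
  exact (isUnit_iff_ne_zero.mpr (by positivity)).map (algebraMap ℝ A)

namespace Matrix

variable {n : Type*} [Fintype n]

theorem det_pos_of_spectrum_eq_empty [DecidableEq n] {M : Matrix n n ℝ}
    (h : spectrum ℝ M = ∅) : 0 < M.det := by
  have hneg : spectrum ℝ (-M) = ∅ := by rw [← spectrum.neg_eq, h, Set.neg_empty]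
  have := (-M).charpoly_monic.eval_pos_of_forall_not_isRoot
    (fun t ht => by simpa [hneg] using mem_spectrum_iff_isRoot_charpoly.mpr ht) 0
  simpa [eval_charpoly] using this

theorem dotProduct_mulVec_self_eq_zero_of_transpose_eq_neg {R : Type*} [CommRing R]
    [NoZeroDivisors R] [CharZero R] {A : Matrix n n R} (hA : Aᵀ = -A) (v : n → R) :
    v ⬝ᵥ A *ᵥ v = 0 := by
  have h : v ⬝ᵥ A *ᵥ v = -(v ⬝ᵥ A *ᵥ v) := by
    conv_lhs => rw [dotProduct_mulVec, ← mulVec_transpose, hA, neg_mulVec, neg_dotProduct,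
      dotProduct_comm]
  exact CharZero.eq_neg_self_iff.mp h

theorem spectrum_eq_empty_of_transpose_eq_neg [DecidableEq n] {A : Matrix n n ℝ}
    (hA : Aᵀ = -A) (hdet : A.det ≠ 0) : spectrum ℝ A = ∅ := by
  refine Set.eq_empty_of_forall_notMem fun t ht => ?_
  rw [spectrum.mem_iff, isUnit_iff_isUnit_det, isUnit_iff_ne_zero, not_not,
    ← exists_mulVec_eq_zero_iff] at ht
  obtain ⟨v, hv, hAv⟩ := ht
  have hAv' : A *ᵥ v = t • v := by
    rw [sub_mulVec, sub_eq_zero] at hAv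
    rw [← hAv]
    ext i
    simp [algebraMap_eq_diagonal, mulVec_diagonal]
  have : t * (v ⬝ᵥ v) = 0 := by
    rw [← smul_eq_mul, ← dotProduct_smul, ← hAv']
    exact dotProduct_mulVec_self_eq_zero_of_transpose_eq_neg hA v
  rcases mul_eq_zero.mp this with rfl | hvv
  · exact hdet (exists_mulVec_eq_zero_iff.mp ⟨v, hv, by simpa using hAv'⟩)
  · exact hv (dotProduct_self_eq_zero.mp hvv)

theorem det_pos_of_isSymm_of_orthogonal_complex_structure [DecidableEq n]
    {G J : Matrix n n ℝ}
    (hG : G.IsSymm) (hGdet : G.det ≠ 0) (hJ : J * J = -1) (horth : Jᵀ * G * J = G) :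
    0 < G.det := by
  have hskew : (G * J)ᵀ = -(G * J) :=
    calc (G * J)ᵀ = Jᵀ * G * (J * -J) := by
          rw [transpose_mul, hG.eq, mul_neg, hJ, neg_neg, mul_one]
      _ = -(G * J) := by rw [← mul_assoc, horth, mul_neg]
  have hJpos : 0 < J.det :=
    det_pos_of_spectrum_eq_empty (spectrum_eq_empty_of_mul_self_eq_neg_one hJ)
  have hGJdet : (G * J).det ≠ 0 := by rw [det_mul]; exact mul_ne_zero hGdet hJpos.ne'
  have hGJpos : 0 < (G * J).det :=
    det_pos_of_spectrum_eq_empty (spectrum_eq_empty_of_transpose_eq_neg hskew hGJdet)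
  rw [det_mul] at hGJpos
  exact pos_of_mul_pos_left hGJpos hJpos.le

theorem det_fromBlocks_zero_one_one_zero [DecidableEq n] (R : Type*) [CommRing R] :
    (fromBlocks 0 1 1 0 : Matrix (n ⊕ n) (n ⊕ n) R).det = (-1) ^ Fintype.card n := by
  have h : (fromBlocks 1 1 0 1 : Matrix (n ⊕ n) (n ⊕ n) R) * fromBlocks 0 1 1 0 =
      fromBlocks 1 1 1 0 := by
    simp [fromBlocks_multiply]
  have := congrArg det h
  rw [det_mul, det_fromBlocks_zero₂₁, det_fromBlocks_one₁₁] at this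
  simpa [det_neg] using this

end Matrix

theorem LinearMap.BilinForm.det_toMatrix_pos_of_orthogonal_complex_structure {M ι : Type*}
    [AddCommGroup M] [Module ℝ M] [Fintype ι] [DecidableEq ι] (b : Basis ι ℝ M)
    {B : LinearMap.BilinForm ℝ M} (hB : B.IsSymm) (hdet : (toMatrix b B).det ≠ 0)
    {J : M →ₗ[ℝ] M} (hJ : J ∘ₗ J = -LinearMap.id)
    (horth : ∀ x y, B (J x) (J y) = B x y) : 0 < (toMatrix b B).det := by
  refine Matrix.det_pos_of_isSymm_of_orthogonal_complex_structure
    (J := LinearMap.toMatrix b b J) ((isSymm_toMatrix_iff_isSymm b).mpr hB) hdet ?_ ?_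
  · rw [← LinearMap.toMatrix_mul, Module.End.mul_eq_comp, hJ, map_neg, LinearMap.toMatrix_id]
  · rw [← toMatrix_comp, show B.comp J J = B from LinearMap.ext₂ horth]

theorem pairB_isSymm (V : Type*) [AddCommGroup V] [Module ℝ V] : (pairB V).IsSymm :=
  ⟨fun x y => by simp only [pairB, LinearMap.mk₂_apply]; ring⟩

theorem toMatrix_pairB_prod_dualBasis {V ι : Type*} [AddCommGroup V] [Module ℝ V] [Fintype ι]
    [DecidableEq ι] (b : Basis ι ℝ V) :
    LinearMap.BilinForm.toMatrix (b.prod b.dualBasis) (pairB V) =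
      (1 / 2 : ℝ) • Matrix.fromBlocks 0 1 1 0 := by
  ext (i | i) (j | j) <;>
    simp [LinearMap.BilinForm.toMatrix_apply, pairB, Matrix.one_apply, Finsupp.single_apply,
      eq_comm]

/-- If `W = V ⊕ V*` admits an orthogonal complex structure, then `dim V` is even. -/
theorem even_dim_of_orthogonal_complex_structure
    {V : Type*} [AddCommGroup V] [Module ℝ V] [FiniteDimensional ℝ V]
    (J : (V × Module.Dual ℝ V) →ₗ[ℝ] V × Module.Dual ℝ V)
    (hJ2 : J ∘ₗ J = -LinearMap.id)
    (horth : ∀ x y, pairB V (J x) (J y) = pairB V x y) :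
    Even (Module.finrank ℝ V) := by
  let b := finBasis ℝ V
  have hdet : (LinearMap.BilinForm.toMatrix (b.prod b.dualBasis) (pairB V)).det =
      (1 / 2 : ℝ) ^ (finrank ℝ V + finrank ℝ V) * (-1) ^ finrank ℝ V := by
    rw [toMatrix_pairB_prod_dualBasis, Matrix.det_smul, Matrix.det_fromBlocks_zero_one_one_zero]
    simp
  have hpos := LinearMap.BilinForm.det_toMatrix_pos_of_orthogonal_complex_structure _
    (pairB_isSymm V) (by rw [hdet]; simp) hJ2 horth
  rw [hdet] at hpos
  by_contra hodd
  rw [Nat.not_even_iff_odd.mp hodd |>.neg_one_pow] at hpos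
  have : (0 : ℝ) < (1 / 2) ^ (finrank ℝ V + finrank ℝ V) := by positivity
  linarith
end

section
/- Let I : V → V be ℝ-linear with I∘I = −id_V, and let ω : V → V* be a linear isomorphism which is skew (ω(X)(Y) = −ω(Y)(X) for all X, Y ∈ V) and satisfies ω∘I = I*∘ω, where I* : V* → V* is the dual map. Define J_I : W → W by J_I(X+ξ) = −I(X) + I*(ξ) and J_ω : W → W by J_ω(X+ξ) = −ω⁻¹(ξ) + ω(X). Then J_I and J_ω are orthogonal for the canonical pairing, satisfy J_I² = J_ω² = −id_W, and anticommute: J_I∘J_ω = −J_ω∘J_I; consequently, for every t ∈ ℝ the map J_t = (sin t)·J_I + (cos t)·J_ω satisfies J_t∘J_t = −id_W and is orthogonal for the canonical pairing. -/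
/-!
An orthogonal endomorphism `J` with `J² = -1` is skew-adjoint, `B (J x) y = -B x (J y)`. Hence for
two such anticommuting `J, K` and `a² + b² = 1`, the cross terms of both `(aJ + bK)²` and
`B ((aJ + bK) x) ((aJ + bK) y)` are multiples of `JK + KJ = 0`, leaving `-(a² + b²) = -1` and
`(a² + b²) B x y`.
-/

open Module

/-- The diagonal generalized complex structure `J_I(X+ξ) = −I(X) + I*(ξ)` of a complex
structure `I` on `V`. -/
noncomputable def JofI {V : Type*} [AddCommGroup V] [Module ℝ V] (I : V →ₗ[ℝ] V) :
    (V × Module.Dual ℝ V) →ₗ[ℝ] V × Module.Dual ℝ V :=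
  LinearMap.prodMap (-I) I.dualMap

/-- The anti-diagonal generalized complex structure `J_ω(X+ξ) = −ω⁻¹(ξ) + ω(X)` of a
symplectic structure `ω : V ≅ V*`. -/
noncomputable def Jofω {V : Type*} [AddCommGroup V] [Module ℝ V]
    (ω : V ≃ₗ[ℝ] Module.Dual ℝ V) :
    (V × Module.Dual ℝ V) →ₗ[ℝ] V × Module.Dual ℝ V :=
  LinearMap.prod (-(ω.symm.toLinearMap ∘ₗ LinearMap.snd ℝ V (Module.Dual ℝ V)))
    (ω.toLinearMap ∘ₗ LinearMap.fst ℝ V (Module.Dual ℝ V))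

namespace LinearMap

variable {R M : Type*} [CommRing R] [AddCommGroup M] [Module R M]

lemma isAdjointPair_neg_of_isOrthogonal {B : LinearMap.BilinForm R M} {J : M →ₗ[R] M}
    (hJ : B.IsOrthogonal J) (hJJ : J ∘ₗ J = -id) : IsAdjointPair B B J (-J) := fun x y => by
  rw [← hJ, ← comp_apply J J, hJJ]
  simp

lemma smul_add_smul_comp_self {J K : M →ₗ[R] M} (hJJ : J ∘ₗ J = -id) (hKK : K ∘ₗ K = -id)
    (hJK : J ∘ₗ K = -(K ∘ₗ J)) {a b : R} (hab : a ^ 2 + b ^ 2 = 1) :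
    (a • J + b • K) ∘ₗ (a • J + b • K) = -id := by
  simp only [comp_add, add_comp, comp_smul, smul_comp, hJJ, hKK, hJK]
  linear_combination (norm := module) -(hab • id)

lemma isOrthogonal_smul_add_smul {B : LinearMap.BilinForm R M} {J K : M →ₗ[R] M}
    (hJ : B.IsOrthogonal J) (hK : B.IsOrthogonal K) (hJJ : J ∘ₗ J = -id)
    (hKK : K ∘ₗ K = -id) (hJK : J ∘ₗ K = -(K ∘ₗ J)) {a b : R} (hab : a ^ 2 + b ^ 2 = 1) :
    B.IsOrthogonal ⇑(a • J + b • K) := fun x y => by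
  have cross : B (J x) (K y) + B (K x) (J y) = 0 := by
    have hJK' : J (K y) = -K (J y) := by simpa using congr($hJK y)
    rw [isAdjointPair_neg_of_isOrthogonal hJ hJJ, isAdjointPair_neg_of_isOrthogonal hK hKK]
    simp [hJK']
  simp only [add_apply, smul_apply, map_add, map_smul, smul_eq_mul, hJ x y, hK x y]
  linear_combination (a * b) * cross + B x y * hab

end LinearMap

section

variable {V : Type*} [AddCommGroup V] [Module ℝ V]

@[simp]
lemma pairB_apply (x y : V × Dual ℝ V) : pairB V x y = 1 / 2 * (x.2 y.1 + y.2 x.1) := rfl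

@[simp]
lemma JofI_apply (I : V →ₗ[ℝ] V) (x : V × Dual ℝ V) : JofI I x = (-I x.1, I.dualMap x.2) := rfl

@[simp]
lemma Jofω_apply (ω : V ≃ₗ[ℝ] Dual ℝ V) (x : V × Dual ℝ V) :
    Jofω ω x = (-ω.symm x.2, ω x.1) := rfl

lemma JofI_comp_self {I : V →ₗ[ℝ] V} (hI : I ∘ₗ I = -LinearMap.id) :
    JofI I ∘ₗ JofI I = -LinearMap.id := by
  have hII (X : V) : I (I X) = -X := by simpa using congr($hI X)
  ext x <;> simp [hII]

lemma isOrthogonal_JofI {I : V →ₗ[ℝ] V} (hI : I ∘ₗ I = -LinearMap.id) :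
    (pairB V).IsOrthogonal (JofI I) := fun x y => by
  have hII (X : V) : I (I X) = -X := by simpa using congr($hI X)
  simp [hII]

lemma Jofω_comp_self (ω : V ≃ₗ[ℝ] Dual ℝ V) : Jofω ω ∘ₗ Jofω ω = -LinearMap.id := by
  ext x <;> simp

lemma isOrthogonal_Jofω {ω : V ≃ₗ[ℝ] Dual ℝ V} (hskew : ∀ X Y : V, ω X Y = -(ω Y X)) :
    (pairB V).IsOrthogonal (Jofω ω) := fun x y => by
  simp only [Jofω_apply, pairB_apply, map_neg, hskew _ (ω.symm _),
    LinearEquiv.apply_symm_apply]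
  ring

lemma JofI_comp_Jofω {I : V →ₗ[ℝ] V} {ω : V ≃ₗ[ℝ] Dual ℝ V}
    (hcompat : ∀ X : V, ω (I X) = I.dualMap (ω X)) :
    JofI I ∘ₗ Jofω ω = -(Jofω ω ∘ₗ JofI I) := by
  have hcompat_symm (ξ : Dual ℝ V) : I (ω.symm ξ) = ω.symm (I.dualMap ξ) :=
    ω.injective (by rw [hcompat, ω.apply_symm_apply, ω.apply_symm_apply])
  ext x <;> simp [hcompat, hcompat_symm]

end

theorem interpolation_family_general
    {V : Type*} [AddCommGroup V] [Module ℝ V]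
    (I : V →ₗ[ℝ] V) (hI : I ∘ₗ I = -LinearMap.id)
    (ω : V ≃ₗ[ℝ] Module.Dual ℝ V)
    (hskew : ∀ X Y : V, ω X Y = -(ω Y X))
    (hcompat : ∀ X : V, ω (I X) = I.dualMap (ω X)) :
    (∀ x y, pairB V (JofI I x) (JofI I y) = pairB V x y) ∧
    (∀ x y, pairB V (Jofω ω x) (Jofω ω y) = pairB V x y) ∧
    JofI I ∘ₗ JofI I = -LinearMap.id ∧
    Jofω ω ∘ₗ Jofω ω = -LinearMap.id ∧
    JofI I ∘ₗ Jofω ω = -(Jofω ω ∘ₗ JofI I) ∧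
    ∀ t : ℝ,
      (Real.sin t • JofI I + Real.cos t • Jofω ω)
          ∘ₗ (Real.sin t • JofI I + Real.cos t • Jofω ω) = -LinearMap.id ∧
      ∀ x y, pairB V ((Real.sin t • JofI I + Real.cos t • Jofω ω) x)
          ((Real.sin t • JofI I + Real.cos t • Jofω ω) y) = pairB V x y := by
  have orthI := isOrthogonal_JofI hI
  have orthω := isOrthogonal_Jofω hskew
  have sqI := JofI_comp_self hI
  have sqω := Jofω_comp_self ω
  have anti := JofI_comp_Jofω hcompat
  refine ⟨orthI, orthω, sqI, sqω, anti, fun t => ⟨?_, ?_⟩⟩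
  · exact LinearMap.smul_add_smul_comp_self sqI sqω anti (Real.sin_sq_add_cos_sq t)
  · exact LinearMap.isOrthogonal_smul_add_smul orthI orthω sqI sqω anti (Real.sin_sq_add_cos_sq t)

/-- For a complex structure `I` and a compatible holomorphic-symplectic-type form `ω`,
the structures `J_I` and `J_ω` are orthogonal complex structures on `W` which
anticommute; consequently `J_t = (sin t)·J_I + (cos t)·J_ω` is an orthogonal complex
structure on `W` for every `t ∈ ℝ`. -/
theorem interpolation_family
    {V : Type*} [AddCommGroup V] [Module ℝ V] [FiniteDimensional ℝ V]
    (I : V →ₗ[ℝ] V) (hI : I ∘ₗ I = -LinearMap.id)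
    (ω : V ≃ₗ[ℝ] Module.Dual ℝ V)
    (hskew : ∀ X Y : V, ω X Y = -(ω Y X))
    (hcompat : ∀ X : V, ω (I X) = I.dualMap (ω X)) :
    (∀ x y, pairB V (JofI I x) (JofI I y) = pairB V x y) ∧
    (∀ x y, pairB V (Jofω ω x) (Jofω ω y) = pairB V x y) ∧
    JofI I ∘ₗ JofI I = -LinearMap.id ∧
    Jofω ω ∘ₗ Jofω ω = -LinearMap.id ∧
    JofI I ∘ₗ Jofω ω = -(Jofω ω ∘ₗ JofI I) ∧
    ∀ t : ℝ,
      (Real.sin t • JofI I + Real.cos t • Jofω ω)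
          ∘ₗ (Real.sin t • JofI I + Real.cos t • Jofω ω) = -LinearMap.id ∧
      ∀ x y, pairB V ((Real.sin t • JofI I + Real.cos t • Jofω ω) x)
          ((Real.sin t • JofI I + Real.cos t • Jofω ω) y) = pairB V x y :=
  interpolation_family_general I hI ω hskew hcompat
end
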